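/- Let X be a simplicial complex, let w : X → ℝ_{>0} be a weight function, and let 0 ≤ ℓ < k ≤ dim(X). Then for all σ, τ ∈ X(k): ∑_{η ∈ X(ℓ) : η ⊆ σ and η ⊆ τ} s_η(σ) s_η(τ) · (k+1) · L̂_η^−_{σ,τ} = (k−ℓ)·L̂_k^−(X;w)_{σ,τ}, where L̂_η^− denotes the symmetric weighted lower Laplacian of lk(X,η) in dimension k−ℓ−1 reindexed by the bijection σ ↦ σ∖η between {σ ∈ X(k) : η ⊆ σ} and lk(X,η)(k−ℓ−1). -/
import Mathlib


open Matrix BigOperators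

namespace Garland

variable {V : Type*}

/-- A (nonempty) simplicial complex on vertex set `V`: a family of finite subsets of `V`
closed under taking subsets. -/
def IsComplex [DecidableEq V] (X : Finset (Finset V)) : Prop :=
  X.Nonempty ∧ ∀ σ ∈ X, ∀ τ ⊆ σ, τ ∈ X

/-- The faces of `X` of cardinality `n` (i.e. of dimension `n - 1`);
`X(k)` in the paper is `facesC X (k+1)`. -/
def facesC [DecidableEq V] (X : Finset (Finset V)) (n : ℕ) : Finset (Finset V) :=
  X.filter fun σ => σ.card = n

/-- The dimension of the complex `X` (largest cardinality of a face, minus one). -/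
def dimX (X : Finset (Finset V)) : ℕ := X.sup Finset.card - 1

/-- `X` is a pure `d`-dimensional complex: every face is contained in a face of dimension `d`. -/
def IsPure [DecidableEq V] (X : Finset (Finset V)) (d : ℕ) : Prop :=
  IsComplex X ∧ ∀ σ ∈ X, ∃ τ ∈ X, σ ⊆ τ ∧ τ.card = d + 1

/-- The incidence sign `(τ:σ) = (-1)^{|{v ∈ τ : v < u}|}` where `u` is the unique element of
`τ \ σ` (meaningful when `σ ⊆ τ` and `|τ \ σ| = 1`). -/
noncomputable def incSign [LinearOrder V] (τ σ : Finset V) : ℝ :=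
  ∑ u ∈ τ \ σ, (-1 : ℝ) ^ (τ.filter fun v => v < u).card

/-- The boundary matrix `∂_n(X)`: rows are indexed by the cardinality-`n` faces (dimension
`n-1`) and columns by the cardinality-`n+1` faces (dimension `n`). -/
noncomputable def bdry [LinearOrder V] (X : Finset (Finset V)) (n : ℕ) :
    Matrix {σ : Finset V // σ ∈ facesC X n} {τ : Finset V // τ ∈ facesC X (n + 1)} ℝ :=
  Matrix.of fun σ τ => if σ.1 ⊆ τ.1 then incSign τ.1 σ.1 else 0

/-- The diagonal weight matrix on the cardinality-`n` faces. -/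
noncomputable def Wmat [LinearOrder V] (X : Finset (Finset V)) (w : Finset V → ℝ) (n : ℕ) :
    Matrix {σ : Finset V // σ ∈ facesC X n} {σ : Finset V // σ ∈ facesC X n} ℝ :=
  Matrix.diagonal fun σ => w σ.1

/-- The diagonal matrix `W^{1/2}` on the cardinality-`n` faces. -/
noncomputable def WmatSqrt [LinearOrder V] (X : Finset (Finset V)) (w : Finset V → ℝ) (n : ℕ) :
    Matrix {σ : Finset V // σ ∈ facesC X n} {σ : Finset V // σ ∈ facesC X n} ℝ :=
  Matrix.diagonal fun σ => Real.sqrt (w σ.1)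

/-- The `k`-dimensional `w`-weighted upper Laplacian
`L_k^+ = W_k⁻¹ ∂_{k+1} W_{k+1} ∂_{k+1}ᵀ` (automatically `0` when `k = dim X`, since then there
are no faces of dimension `k+1`). -/
noncomputable def lapUp [LinearOrder V] (X : Finset (Finset V)) (w : Finset V → ℝ) (k : ℕ) :
    Matrix {σ : Finset V // σ ∈ facesC X (k + 1)} {σ : Finset V // σ ∈ facesC X (k + 1)} ℝ :=
  (Wmat X w (k + 1))⁻¹ * bdry X (k + 1) * Wmat X w (k + 2) * (bdry X (k + 1))ᵀ

/-- The `k`-dimensional `w`-weighted lower Laplacian `L_k^- = ∂_kᵀ W_{k-1}⁻¹ ∂_k W_k`. -/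
noncomputable def lapDown [LinearOrder V] (X : Finset (Finset V)) (w : Finset V → ℝ) (k : ℕ) :
    Matrix {σ : Finset V // σ ∈ facesC X (k + 1)} {σ : Finset V // σ ∈ facesC X (k + 1)} ℝ :=
  (bdry X k)ᵀ * (Wmat X w k)⁻¹ * bdry X k * Wmat X w (k + 1)

/-- The `k`-dimensional `w`-weighted total Laplacian. -/
noncomputable def lapTot [LinearOrder V] (X : Finset (Finset V)) (w : Finset V → ℝ) (k : ℕ) :
    Matrix {σ : Finset V // σ ∈ facesC X (k + 1)} {σ : Finset V // σ ∈ facesC X (k + 1)} ℝ :=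
  lapUp X w k + lapDown X w k

/-- The symmetric `w`-weighted upper Laplacian
`L̂_k^+ = W_k^{-1/2} ∂_{k+1} W_{k+1} ∂_{k+1}ᵀ W_k^{-1/2}`. -/
noncomputable def symLapUp [LinearOrder V] (X : Finset (Finset V)) (w : Finset V → ℝ) (k : ℕ) :
    Matrix {σ : Finset V // σ ∈ facesC X (k + 1)} {σ : Finset V // σ ∈ facesC X (k + 1)} ℝ :=
  (WmatSqrt X w (k + 1))⁻¹ * bdry X (k + 1) * Wmat X w (k + 2) * (bdry X (k + 1))ᵀ *
    (WmatSqrt X w (k + 1))⁻¹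

/-- The symmetric `w`-weighted lower Laplacian `L̂_k^- = W_k^{1/2} ∂_kᵀ W_{k-1}⁻¹ ∂_k W_k^{1/2}`. -/
noncomputable def symLapDown [LinearOrder V] (X : Finset (Finset V)) (w : Finset V → ℝ) (k : ℕ) :
    Matrix {σ : Finset V // σ ∈ facesC X (k + 1)} {σ : Finset V // σ ∈ facesC X (k + 1)} ℝ :=
  WmatSqrt X w (k + 1) * (bdry X k)ᵀ * (Wmat X w k)⁻¹ * bdry X k * WmatSqrt X w (k + 1)

/-- The unweighted upper Laplacian `L_k^+ = ∂_{k+1} ∂_{k+1}ᵀ`. -/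
noncomputable def ulapUp [LinearOrder V] (X : Finset (Finset V)) (k : ℕ) :
    Matrix {σ : Finset V // σ ∈ facesC X (k + 1)} {σ : Finset V // σ ∈ facesC X (k + 1)} ℝ :=
  bdry X (k + 1) * (bdry X (k + 1))ᵀ

/-- The unweighted lower Laplacian `L_k^- = ∂_kᵀ ∂_k`. -/
noncomputable def ulapDown [LinearOrder V] (X : Finset (Finset V)) (k : ℕ) :
    Matrix {σ : Finset V // σ ∈ facesC X (k + 1)} {σ : Finset V // σ ∈ facesC X (k + 1)} ℝ :=
  (bdry X k)ᵀ * bdry X k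

/-- The unweighted total Laplacian `L_k = L_k^+ + L_k^-`. -/
noncomputable def ulapTot [LinearOrder V] (X : Finset (Finset V)) (k : ℕ) :
    Matrix {σ : Finset V // σ ∈ facesC X (k + 1)} {σ : Finset V // σ ∈ facesC X (k + 1)} ℝ :=
  ulapUp X k + ulapDown X k

/-- The link of a simplex `η` in `X`. -/
def link [DecidableEq V] (X : Finset (Finset V)) (η : Finset V) : Finset (Finset V) :=
  X.filter fun τ => τ ∩ η = ∅ ∧ τ ∪ η ∈ X

/-- The weight function of a pure `d`-dimensional complex:
`w(σ) = |{τ ∈ X(d) : σ ⊆ τ}|`. -/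
noncomputable def pureWeight [DecidableEq V] (X : Finset (Finset V)) (d : ℕ) :
    Finset V → ℝ :=
  fun σ => ((facesC X (d + 1)).filter fun τ => σ ⊆ τ).card

/-- The weighted degree `∑_{v ∈ N_X(σ)} w(σ ∪ {v}) / w(σ)` of a face `σ`. -/
noncomputable def wdeg [Fintype V] [DecidableEq V] (X : Finset (Finset V))
    (w : Finset V → ℝ) (σ : Finset V) : ℝ :=
  ∑ v ∈ Finset.univ.filter (fun v => v ∉ σ ∧ insert v σ ∈ X), w (insert v σ) / w σ

/-- `Δ_k(X;w)`: the maximal weighted degree of a `k`-dimensional face. -/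
noncomputable def maxWdeg [Fintype V] [DecidableEq V] (X : Finset (Finset V))
    (w : Finset V → ℝ) (k : ℕ) : ℝ :=
  sSup (wdeg X w '' (facesC X (k + 1) : Set (Finset V)))

/-- `δ_k(X;w)`: the minimal weighted degree of a `k`-dimensional face. -/
noncomputable def minWdeg [Fintype V] [DecidableEq V] (X : Finset (Finset V))
    (w : Finset V → ℝ) (k : ℕ) : ℝ :=
  sInf (wdeg X w '' (facesC X (k + 1) : Set (Finset V)))

/-- The (unweighted) degree of a `k`-dimensional face: the number of `(k+1)`-dimensional
faces containing it. -/
def degU [DecidableEq V] (X : Finset (Finset V)) (k : ℕ) (σ : Finset V) : ℕ :=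
  ((facesC X (k + 2)).filter fun τ => σ ⊆ τ).card

/-- `Δ_k(X)`: the maximal degree of a `k`-dimensional face. -/
def maxDeg [DecidableEq V] (X : Finset (Finset V)) (k : ℕ) : ℕ :=
  (facesC X (k + 1)).sup (degU X k)

/-- `δ_k(X)`: the minimal degree of a `k`-dimensional face. -/
noncomputable def minDeg [DecidableEq V] (X : Finset (Finset V)) (k : ℕ) : ℕ :=
  sInf (degU X k '' (facesC X (k + 1) : Set (Finset V)))

/-- The spectrum of a real matrix, as the multiset of roots of its characteristic
polynomial (for a matrix that is diagonalizable with real eigenvalues, this is exactly the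
multiset of its eigenvalues, with multiplicity). -/
noncomputable def specM {n : Type*} [Fintype n] [DecidableEq n] (M : Matrix n n ℝ) :
    Multiset ℝ :=
  M.charpoly.roots

/-- `eigAsc M i` is the `i`-th smallest eigenvalue (1-based) of `M`. -/
noncomputable def eigAsc {n : Type*} [Fintype n] [DecidableEq n] (M : Matrix n n ℝ)
    (i : ℕ) : ℝ :=
  ((specM M).sort (· ≤ ·)).getD (i - 1) 0

/-- `eigDesc M i` is the `i`-th largest eigenvalue (1-based) of `M`. -/
noncomputable def eigDesc {n : Type*} [Fintype n] [DecidableEq n] (M : Matrix n n ℝ)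
    (i : ℕ) : ℝ :=
  ((specM M).sort (· ≤ ·)).reverse.getD (i - 1) 0

/-- The dimension of the `k`-th reduced homology `H̃_k(X;ℝ) = ker ∂_k / im ∂_{k+1}`
(the quotient of the kernel of `∂_k` by the image of `∂_{k+1}`, which is contained in the
kernel for a simplicial complex). -/
noncomputable def homologyDim [LinearOrder V] (X : Finset (Finset V)) (k : ℕ) : ℕ :=
  Module.finrank ℝ
    (LinearMap.ker (Matrix.mulVecLin (bdry X k)) ⧸
      Submodule.comap (LinearMap.ker (Matrix.mulVecLin (bdry X k))).subtype
        (LinearMap.range (Matrix.mulVecLin (bdry X (k + 1)))))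

/-- `s_η(σ) = C(|σ|, ℓ+1)^{-1/2} · (-1)^{|{(i,j) : i ∈ σ∖η, j ∈ η, i > j}|}`. -/
noncomputable def sCoef [LinearOrder V] (ℓ : ℕ) (η σ : Finset V) : ℝ :=
  (Real.sqrt ((σ.card).choose (ℓ + 1)))⁻¹ *
    (-1 : ℝ) ^ (((σ \ η) ×ˢ η).filter fun p => p.2 < p.1).card

/-- The `(a,b)` entry of the symmetric weighted upper Laplacian `L̂_m^+(Y;w)`, as a function
of arbitrary finsets `a b` (zero junk value if `a` or `b` is not an `m`-dimensional face). -/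
noncomputable def symLapUpE [LinearOrder V] (Y : Finset (Finset V)) (w : Finset V → ℝ)
    (m : ℕ) (a b : Finset V) : ℝ :=
  if h : a ∈ facesC Y (m + 1) ∧ b ∈ facesC Y (m + 1) then
    symLapUp Y w m ⟨a, h.1⟩ ⟨b, h.2⟩
  else 0

/-- The `(a,b)` entry of the symmetric weighted lower Laplacian `L̂_m^-(Y;w)`, as a function
of arbitrary finsets `a b` (zero junk value if `a` or `b` is not an `m`-dimensional face). -/
noncomputable def symLapDownE [LinearOrder V] (Y : Finset (Finset V)) (w : Finset V → ℝ)
    (m : ℕ) (a b : Finset V) : ℝ :=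
  if h : a ∈ facesC Y (m + 1) ∧ b ∈ facesC Y (m + 1) then
    symLapDown Y w m ⟨a, h.1⟩ ⟨b, h.2⟩
  else 0



lemma diag_inv {n : Type*} [Fintype n] [DecidableEq n] (d : n → ℝ)
    (hd : ∀ i, d i ≠ 0) : (Matrix.diagonal d)⁻¹ = Matrix.diagonal fun i => (d i)⁻¹ := by
  apply Matrix.inv_eq_right_inv
  rw [Matrix.diagonal_mul_diagonal,
    show (fun i => d i * (d i)⁻¹) = fun _ => (1:ℝ) from funext fun i => mul_inv_cancel₀ (hd i),
    Matrix.diagonal_one]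

lemma mem_facesC [DecidableEq V] {X : Finset (Finset V)} {n : ℕ} {a : Finset V} :
    a ∈ facesC X n ↔ a ∈ X ∧ a.card = n := Finset.mem_filter

lemma symLapDown_apply [LinearOrder V] (Y : Finset (Finset V)) (w : Finset V → ℝ) (m : ℕ)
    (hw : ∀ ρ ∈ facesC Y m, w ρ ≠ 0)
    (a b : {σ : Finset V // σ ∈ facesC Y (m+1)}) :
    symLapDown Y w m a b =
      Real.sqrt (w a.1) * Real.sqrt (w b.1) *
        ∑ ρ ∈ facesC Y m, (if ρ ⊆ a.1 ∧ ρ ⊆ b.1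
          then incSign a.1 ρ * incSign b.1 ρ * (w ρ)⁻¹ else 0) := by
  have hinv : (Wmat Y w m)⁻¹ = Matrix.diagonal (fun ρ : {σ : Finset V // σ ∈ facesC Y m} => (w ρ.1)⁻¹) := by
    rw [Wmat, diag_inv]
    exact fun i => hw i.1 i.2
  rw [symLapDown, hinv]
  rw [show WmatSqrt Y w (m+1) = Matrix.diagonal (fun σ : {σ : Finset V // σ ∈ facesC Y (m+1)} => Real.sqrt (w σ.1)) from rfl]
  rw [Matrix.mul_diagonal, Matrix.mul_apply]
  have key : ∀ j : {σ : Finset V // σ ∈ facesC Y m},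
      ((Matrix.diagonal (fun σ : {σ : Finset V // σ ∈ facesC Y (m+1)} => Real.sqrt (w σ.1)) * (bdry Y m)ᵀ
        * Matrix.diagonal fun ρ : {σ : Finset V // σ ∈ facesC Y m} => (w ρ.1)⁻¹) a j) * bdry Y m j b
      = Real.sqrt (w a.1) * (if j.1 ⊆ a.1 ∧ j.1 ⊆ b.1
          then incSign a.1 j.1 * incSign b.1 j.1 * (w j.1)⁻¹ else 0) := by
    intro j
    simp only [Matrix.mul_diagonal, Matrix.diagonal_mul, Matrix.transpose_apply, bdry,
      Matrix.of_apply]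
    by_cases ha : j.1 ⊆ a.1 <;> by_cases hb : j.1 ⊆ b.1 <;> simp [ha, hb] <;> ring
  have hsum : (∑ j : {σ : Finset V // σ ∈ facesC Y m},
      ((Matrix.diagonal (fun σ : {σ : Finset V // σ ∈ facesC Y (m+1)} => Real.sqrt (w σ.1)) * (bdry Y m)ᵀ
        * Matrix.diagonal fun ρ : {σ : Finset V // σ ∈ facesC Y m} => (w ρ.1)⁻¹) a j) * bdry Y m j b)
      = Real.sqrt (w a.1) * ∑ ρ ∈ facesC Y m, (if ρ ⊆ a.1 ∧ ρ ⊆ b.1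
          then incSign a.1 ρ * incSign b.1 ρ * (w ρ)⁻¹ else 0) := by
    rw [Finset.mul_sum, ← Finset.sum_coe_sort (facesC Y m)
      (fun ρ => Real.sqrt (w a.1) * (if ρ ⊆ a.1 ∧ ρ ⊆ b.1
          then incSign a.1 ρ * incSign b.1 ρ * (w ρ)⁻¹ else 0))]
    exact Finset.sum_congr rfl fun j _ => key j
  rw [hsum]; ring

lemma insert_sdiff_eq_singleton [DecidableEq V] {ρ : Finset V} {u : V} (hu : u ∉ ρ) :
    insert u ρ \ ρ = {u} := by
  ext v
  simp only [Finset.mem_sdiff, Finset.mem_insert, Finset.mem_singleton]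
  constructor
  · rintro ⟨h1 | h1, h2⟩ <;> tauto
  · rintro rfl; exact ⟨Or.inl rfl, hu⟩

lemma incSign_insert [LinearOrder V] (ρ : Finset V) (u : V) (hu : u ∉ ρ) :
    incSign (insert u ρ) ρ = (-1:ℝ) ^ ((insert u ρ).filter fun v => v < u).card := by
  rw [incSign, insert_sdiff_eq_singleton hu, Finset.sum_singleton]

lemma sign_key [LinearOrder V] (ρ η : Finset V) (u : V) (hu : u ∉ ρ) (hη : η ⊆ ρ) :
    ((((insert u ρ) \ η) ×ˢ η).filter fun p => p.2 < p.1).card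
      + (((insert u ρ) \ η).filter fun v => v < u).card
    = (((ρ \ η) ×ˢ η).filter fun p => p.2 < p.1).card
      + ((insert u ρ).filter fun v => v < u).card := by
  have huη : u ∉ η := fun h => hu (hη h)
  have hins : insert u ρ \ η = insert u (ρ \ η) := Finset.insert_sdiff_of_notMem ρ huη
  have huρη : u ∉ ρ \ η := fun h => hu (Finset.mem_sdiff.mp h).1
  -- first summand
  have h1 : ((((insert u ρ) \ η) ×ˢ η).filter fun p => p.2 < p.1).card
      = (((ρ \ η) ×ˢ η).filter fun p => p.2 < p.1).card + (η.filter fun v => v < u).card := by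
    rw [hins, Finset.insert_eq, Finset.union_product, Finset.filter_union,
      Finset.card_union_of_disjoint, add_comm]
    · congr 1
      rw [Finset.singleton_product, Finset.filter_map, Finset.card_map]
      congr 1
    · refine Finset.disjoint_filter_filter ?_
      rw [Finset.disjoint_left]
      rintro ⟨p1, p2⟩ hp hq
      rw [Finset.singleton_product, Finset.mem_map] at hp
      obtain ⟨x, -, hx⟩ := hp
      simp only [Function.Embedding.coeFn_mk] at hx
      cases hx
      rw [Finset.mem_product] at hq
      exact huρη hq.1
  -- second summand
  have h2 : (((insert u ρ) \ η).filter fun v => v < u).card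
      = ((ρ \ η).filter fun v => v < u).card := by
    rw [hins, Finset.filter_insert, if_neg (lt_irrefl u)]
  -- RHS second
  have h3 : ((insert u ρ).filter fun v => v < u).card
      = ((ρ \ η).filter fun v => v < u).card + (η.filter fun v => v < u).card := by
    have hsplit : ρ.filter (fun v => v < u) = ((ρ \ η).filter fun v => v < u) ∪ (η.filter fun v => v < u) := by
      rw [← Finset.filter_union, Finset.sdiff_union_of_subset hη]
    rw [Finset.filter_insert, if_neg (lt_irrefl u), hsplit, Finset.card_union_of_disjoint]
    exact Finset.disjoint_filter_filter (Finset.sdiff_disjoint)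
  omega

lemma choose_arith (ℓ k : ℕ) (h : ℓ < k) :
    ((k:ℝ)+1) * (k.choose (ℓ+1)) = ((k:ℝ) - ℓ) * ((k+1).choose (ℓ+1)) := by
  have hnat : (k+1) * k.choose (ℓ+1) = (k - ℓ) * ((k+1).choose (ℓ+1)) := by
    apply Nat.eq_of_mul_eq_mul_right (Nat.succ_pos ℓ)
    have e1 : k.choose (ℓ+1) * (ℓ+1) = k.choose ℓ * (k - ℓ) := Nat.choose_succ_right_eq k ℓ
    have e2 : (k+1) * k.choose ℓ = (k+1).choose (ℓ+1) * (ℓ+1) := Nat.add_one_mul_choose_eq k ℓ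
    calc (k+1) * k.choose (ℓ+1) * (ℓ+1) = (k+1) * (k.choose (ℓ+1) * (ℓ+1)) := by ring
      _ = (k+1) * (k.choose ℓ * (k - ℓ)) := by rw [e1]
      _ = ((k+1) * k.choose ℓ) * (k - ℓ) := by ring
      _ = ((k+1).choose (ℓ+1) * (ℓ+1)) * (k - ℓ) := by rw [e2]
      _ = (k - ℓ) * ((k+1).choose (ℓ+1)) * (ℓ+1) := by ring
  have hcast := congrArg (fun n : ℕ => (n : ℝ)) hnat
  simp only [Nat.cast_mul, Nat.cast_add, Nat.cast_one, Nat.cast_sub h.le] at hcast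
  linarith [hcast]

lemma alg_key (C : ℝ) (hC0 : 0 ≤ C) (a b c d e f g : ℕ)
    (h1 : a + b = e + c) (h2 : f + g = e + d) :
    (Real.sqrt C)⁻¹ * (-1:ℝ)^a * ((Real.sqrt C)⁻¹ * (-1:ℝ)^f) * ((-1:ℝ)^b * (-1:ℝ)^g)
      = C⁻¹ * ((-1:ℝ)^c * (-1:ℝ)^d) := by
  have hC : (Real.sqrt C)⁻¹ * (Real.sqrt C)⁻¹ = C⁻¹ := by
    rw [← mul_inv, Real.mul_self_sqrt hC0]
  calc (Real.sqrt C)⁻¹ * (-1:ℝ)^a * ((Real.sqrt C)⁻¹ * (-1:ℝ)^f) * ((-1:ℝ)^b * (-1:ℝ)^g)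
      = ((Real.sqrt C)⁻¹ * (Real.sqrt C)⁻¹) * ((-1:ℝ)^(a+b) * (-1:ℝ)^(f+g)) := by
        rw [pow_add, pow_add]; ring
    _ = C⁻¹ * ((-1:ℝ)^(e+c) * (-1:ℝ)^(e+d)) := by rw [hC, h1, h2]
    _ = C⁻¹ * (((-1:ℝ)^e * (-1:ℝ)^e) * ((-1:ℝ)^c * (-1:ℝ)^d)) := by
        rw [pow_add, pow_add]; ring
    _ = C⁻¹ * ((-1:ℝ)^c * (-1:ℝ)^d) := by rw [← mul_pow]; norm_num

lemma term_key [LinearOrder V] (ℓ k : ℕ) (η ρ σ τ : Finset V)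
    (hσc : σ.card = k+1) (hτc : τ.card = k+1)
    (hρc : ρ.card = k)
    (hηρ : η ⊆ ρ) (hρσ : ρ ⊆ σ) (hρτ : ρ ⊆ τ) :
    sCoef ℓ η σ * sCoef ℓ η τ * (incSign (σ \ η) (ρ \ η) * incSign (τ \ η) (ρ \ η)) =
      (((k+1).choose (ℓ+1) : ℝ))⁻¹ * (incSign σ ρ * incSign τ ρ) := by
  obtain ⟨u, hu⟩ : ∃ u, σ \ ρ = {u} := by
    apply Finset.card_eq_one.mp
    rw [Finset.card_sdiff_of_subset hρσ, hσc, hρc]; omega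
  have huρ : u ∉ ρ := by
    have : u ∈ σ \ ρ := hu ▸ Finset.mem_singleton_self u
    exact (Finset.mem_sdiff.mp this).2
  have hσe : σ = insert u ρ := by
    rw [← Finset.union_sdiff_of_subset hρσ, hu, Finset.union_comm, ← Finset.insert_eq]
  obtain ⟨v, hv⟩ : ∃ v, τ \ ρ = {v} := by
    apply Finset.card_eq_one.mp
    rw [Finset.card_sdiff_of_subset hρτ, hτc, hρc]; omega
  have hvρ : v ∉ ρ := by
    have : v ∈ τ \ ρ := hv ▸ Finset.mem_singleton_self v
    exact (Finset.mem_sdiff.mp this).2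
  have hτe : τ = insert v ρ := by
    rw [← Finset.union_sdiff_of_subset hρτ, hv, Finset.union_comm, ← Finset.insert_eq]
  have hηρ' : η ⊆ ρ := hηρ
  subst hσe hτe
  have huη : u ∉ η := fun h => huρ (hηρ' h)
  have hvη : v ∉ η := fun h => hvρ (hηρ' h)
  have huρη : u ∉ ρ \ η := fun h => huρ (Finset.mem_sdiff.mp h).1
  have hvρη : v ∉ ρ \ η := fun h => hvρ (Finset.mem_sdiff.mp h).1
  rw [show insert u ρ \ η = insert u (ρ \ η) from Finset.insert_sdiff_of_notMem ρ huη,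
      show insert v ρ \ η = insert v (ρ \ η) from Finset.insert_sdiff_of_notMem ρ hvη,
      incSign_insert _ _ huρη, incSign_insert _ _ hvρη,
      incSign_insert _ _ huρ, incSign_insert _ _ hvρ]
  rw [sCoef, sCoef, hσc, hτc]
  rw [← Finset.insert_sdiff_of_notMem ρ huη, ← Finset.insert_sdiff_of_notMem ρ hvη]
  exact alg_key _ (Nat.cast_nonneg _) _ _ _ _ _ _ _
    (sign_key ρ η u huρ hηρ') (sign_key ρ η v hvρ hηρ')

lemma link_sum_reindex [LinearOrder V] (X : Finset (Finset V)) (hX : IsComplex X)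
    (ℓ k : ℕ) (hlk : ℓ < k) (η σ τ : Finset V)
    (hσX : σ ∈ X) (hτX : τ ∈ X)
    (hηc : η.card = ℓ+1) (hησ : η ⊆ σ) (hητ : η ⊆ τ)
    (f : Finset V → ℝ) :
    ∑ ρ' ∈ (facesC (link X η) (k-ℓ-1)).filter (fun ρ' => ρ' ⊆ σ \ η ∧ ρ' ⊆ τ \ η), f ρ'
    = ∑ ρ ∈ (facesC X k).filter (fun ρ => η ⊆ ρ ∧ ρ ⊆ σ ∧ ρ ⊆ τ), f (ρ \ η) := by
  have hdisj : ∀ ρ' : Finset V, ρ' ∩ η = ∅ → Disjoint ρ' η := by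
    intro ρ' h
    rwa [← Finset.disjoint_iff_inter_eq_empty] at h
  apply Finset.sum_nbij' (fun ρ' => ρ' ∪ η) (fun ρ => ρ \ η)
  · intro ρ' h
    rw [Finset.mem_filter, mem_facesC, link, Finset.mem_filter] at h
    obtain ⟨⟨⟨hX', hint, hun⟩, hcard⟩, hsub1, hsub2⟩ := h
    rw [Finset.mem_filter, mem_facesC]
    refine ⟨⟨hun, ?_⟩, Finset.subset_union_right, ?_, ?_⟩
    · rw [Finset.card_union_of_disjoint (hdisj _ hint), hcard, hηc]; omega
    · exact Finset.union_subset (hsub1.trans (Finset.sdiff_subset)) hησ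
    · exact Finset.union_subset (hsub2.trans (Finset.sdiff_subset)) hητ
  · intro ρ h
    rw [Finset.mem_filter, mem_facesC] at h
    obtain ⟨⟨hρX, hρc⟩, hηρ, hρσ, hρτ⟩ := h
    rw [Finset.mem_filter, mem_facesC, link, Finset.mem_filter]
    refine ⟨⟨⟨hX.2 ρ hρX _ (Finset.sdiff_subset), Finset.sdiff_inter_self η ρ, ?_⟩, ?_⟩, ?_, ?_⟩
    · rw [Finset.sdiff_union_of_subset hηρ]; exact hρX
    · rw [Finset.card_sdiff_of_subset hηρ, hρc, hηc]; omega
    · exact Finset.sdiff_subset_sdiff hρσ Finset.Subset.rfl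
    · exact Finset.sdiff_subset_sdiff hρτ Finset.Subset.rfl
  · intro ρ' h
    rw [Finset.mem_filter, mem_facesC, link, Finset.mem_filter] at h
    exact Finset.union_sdiff_cancel_right (hdisj _ h.1.1.2.1)
  · intro ρ h
    rw [Finset.mem_filter] at h
    exact Finset.sdiff_union_of_subset h.2.1
  · intro ρ' h
    rw [Finset.mem_filter, mem_facesC, link, Finset.mem_filter] at h
    rw [Finset.union_sdiff_cancel_right (hdisj _ h.1.1.2.1)]

/-- Proposition: lower Laplacian identity. For a simplicial complex `X`
with weight `w : X → ℝ_{>0}`, `0 ≤ ℓ < k ≤ dim X` and `σ, τ ∈ X(k)`: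
`∑_{η ∈ X(ℓ) : η ⊆ σ, η ⊆ τ} s_η(σ) s_η(τ) (k+1) (L̂_η^−)_{σ,τ} = (k−ℓ)·L̂_k^−(X;w)_{σ,τ}`,
where `(L̂_η^−)_{σ,τ}` is the `(σ∖η, τ∖η)` entry of the symmetric weighted lower Laplacian
of `lk(X,η)` in dimension `k−ℓ−1`. -/
theorem lower_laplacian_identity {V : Type*} [Fintype V] [LinearOrder V]
    (X : Finset (Finset V)) (w : Finset V → ℝ)
    (hX : IsComplex X) (hw : ∀ σ ∈ X, 0 < w σ)
    (ℓ k : ℕ) (hlk : ℓ < k) (hk : k ≤ dimX X)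
    (σ τ : Finset V) (hσ : σ ∈ facesC X (k + 1)) (hτ : τ ∈ facesC X (k + 1)) :
    ∑ η ∈ (facesC X (ℓ + 1)).filter (fun η => η ⊆ σ ∧ η ⊆ τ),
      sCoef ℓ η σ * sCoef ℓ η τ * ((k : ℝ) + 1) *
        symLapDownE (link X η) (fun ρ => w (ρ ∪ η)) (k - ℓ - 1) (σ \ η) (τ \ η) =
      ((k : ℝ) - ℓ) * symLapDownE X w k σ τ := by
  obtain ⟨hσX, hσc⟩ := mem_facesC.mp hσ
  obtain ⟨hτX, hτc⟩ := mem_facesC.mp hτ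
  have hwX : ∀ ρ ∈ facesC X k, w ρ ≠ 0 := fun ρ hρ => (hw ρ (mem_facesC.mp hρ).1).ne'
  -- Step 1: rewrite each summand of the LHS as a sum over faces ρ of cardinality k
  have hstep1 : ∀ η ∈ (facesC X (ℓ + 1)).filter (fun η => η ⊆ σ ∧ η ⊆ τ),
      sCoef ℓ η σ * sCoef ℓ η τ * ((k : ℝ) + 1) *
        symLapDownE (link X η) (fun ρ => w (ρ ∪ η)) (k - ℓ - 1) (σ \ η) (τ \ η)
      = ∑ ρ ∈ (facesC X k).filter (fun ρ => η ⊆ ρ ∧ ρ ⊆ σ ∧ ρ ⊆ τ),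
          sCoef ℓ η σ * sCoef ℓ η τ * ((k : ℝ) + 1) *
            (Real.sqrt (w σ) * Real.sqrt (w τ) *
              (incSign (σ \ η) (ρ \ η) * incSign (τ \ η) (ρ \ η) * (w ρ)⁻¹)) := by
    intro η hη
    rw [Finset.mem_filter, mem_facesC] at hη
    obtain ⟨⟨hηX, hηc⟩, hησ, hητ⟩ := hη
    have hσ' : σ \ η ∈ facesC (link X η) (k - ℓ - 1 + 1) := by
      rw [mem_facesC, link, Finset.mem_filter]
      refine ⟨⟨hX.2 σ hσX _ Finset.sdiff_subset, Finset.sdiff_inter_self η σ, ?_⟩, ?_⟩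
      · rw [Finset.sdiff_union_of_subset hησ]; exact hσX
      · rw [Finset.card_sdiff_of_subset hησ, hσc, hηc]; omega
    have hτ' : τ \ η ∈ facesC (link X η) (k - ℓ - 1 + 1) := by
      rw [mem_facesC, link, Finset.mem_filter]
      refine ⟨⟨hX.2 τ hτX _ Finset.sdiff_subset, Finset.sdiff_inter_self η τ, ?_⟩, ?_⟩
      · rw [Finset.sdiff_union_of_subset hητ]; exact hτX
      · rw [Finset.card_sdiff_of_subset hητ, hτc, hηc]; omega
    have hw' : ∀ ρ ∈ facesC (link X η) (k - ℓ - 1), w (ρ ∪ η) ≠ 0 := by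
      intro ρ hρ
      rw [mem_facesC, link, Finset.mem_filter] at hρ
      exact (hw _ hρ.1.2.2).ne'
    have hE : symLapDownE (link X η) (fun ρ => w (ρ ∪ η)) (k - ℓ - 1) (σ \ η) (τ \ η)
        = Real.sqrt (w σ) * Real.sqrt (w τ) *
            ∑ ρ' ∈ facesC (link X η) (k - ℓ - 1),
              (if ρ' ⊆ σ \ η ∧ ρ' ⊆ τ \ η
                then incSign (σ \ η) ρ' * incSign (τ \ η) ρ' * (w (ρ' ∪ η))⁻¹ else 0) := by
      have h0 : symLapDownE (link X η) (fun ρ => w (ρ ∪ η)) (k - ℓ - 1) (σ \ η) (τ \ η)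
          = Real.sqrt (w ((σ \ η) ∪ η)) * Real.sqrt (w ((τ \ η) ∪ η)) *
            ∑ ρ' ∈ facesC (link X η) (k - ℓ - 1),
              (if ρ' ⊆ σ \ η ∧ ρ' ⊆ τ \ η
                then incSign (σ \ η) ρ' * incSign (τ \ η) ρ' * (w (ρ' ∪ η))⁻¹ else 0) := by
        unfold symLapDownE
        rw [dif_pos (⟨hσ', hτ'⟩ : (σ \ η) ∈ facesC (link X η) (k - ℓ - 1 + 1) ∧
          (τ \ η) ∈ facesC (link X η) (k - ℓ - 1 + 1))]
        exact symLapDown_apply (link X η) (fun ρ => w (ρ ∪ η)) (k - ℓ - 1) hw' ⟨_, hσ'⟩ ⟨_, hτ'⟩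
      rw [h0, Finset.sdiff_union_of_subset hησ, Finset.sdiff_union_of_subset hητ]
    rw [hE, ← Finset.sum_filter, Finset.mul_sum, Finset.mul_sum]
    rw [link_sum_reindex X hX ℓ k hlk η σ τ hσX hτX hηc hησ hητ
      (fun ρ' => sCoef ℓ η σ * sCoef ℓ η τ * ((k : ℝ) + 1) *
        (Real.sqrt (w σ) * Real.sqrt (w τ) *
          (incSign (σ \ η) ρ' * incSign (τ \ η) ρ' * (w (ρ' ∪ η))⁻¹)))]
    refine Finset.sum_congr rfl fun ρ hρ => ?_
    rw [Finset.sdiff_union_of_subset (Finset.mem_filter.mp hρ).2.1]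
  -- Step 2: exchange the order of summation
  have hcomm : ∀ (η ρ : Finset V),
      (η ∈ (facesC X (ℓ + 1)).filter (fun η => η ⊆ σ ∧ η ⊆ τ) ∧
        ρ ∈ (facesC X k).filter (fun ρ => η ⊆ ρ ∧ ρ ⊆ σ ∧ ρ ⊆ τ))
      ↔ (η ∈ (facesC X (ℓ + 1)).filter (fun η => η ⊆ ρ) ∧
        ρ ∈ (facesC X k).filter (fun ρ => ρ ⊆ σ ∧ ρ ⊆ τ)) := by
    intro η ρ
    simp only [Finset.mem_filter, mem_facesC]
    constructor
    · rintro ⟨⟨⟨h1, h2⟩, h3, h4⟩, ⟨h5, h6⟩, h7, h8, h9⟩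
      exact ⟨⟨⟨h1, h2⟩, h7⟩, ⟨h5, h6⟩, h8, h9⟩
    · rintro ⟨⟨⟨h1, h2⟩, h3⟩, ⟨h5, h6⟩, h7, h8⟩
      exact ⟨⟨⟨h1, h2⟩, h3.trans h7, h3.trans h8⟩, ⟨h5, h6⟩, h3, h7, h8⟩
  -- Step 3: the inner sum over η is constant
  have hinner : ∀ ρ ∈ (facesC X k).filter (fun ρ => ρ ⊆ σ ∧ ρ ⊆ τ),
      (∑ η ∈ (facesC X (ℓ + 1)).filter (fun η => η ⊆ ρ),
        sCoef ℓ η σ * sCoef ℓ η τ * ((k : ℝ) + 1) *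
          (Real.sqrt (w σ) * Real.sqrt (w τ) *
            (incSign (σ \ η) (ρ \ η) * incSign (τ \ η) (ρ \ η) * (w ρ)⁻¹)))
      = ((k : ℝ) - ℓ) * (Real.sqrt (w σ) * Real.sqrt (w τ) *
          (incSign σ ρ * incSign τ ρ * (w ρ)⁻¹)) := by
    intro ρ hρ
    rw [Finset.mem_filter, mem_facesC] at hρ
    obtain ⟨⟨hρX, hρc⟩, hρσ, hρτ⟩ := hρ
    have hset : (facesC X (ℓ + 1)).filter (fun η => η ⊆ ρ) = Finset.powersetCard (ℓ + 1) ρ := by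
      ext η
      rw [Finset.mem_filter, mem_facesC, Finset.mem_powersetCard]
      constructor
      · rintro ⟨⟨-, h2⟩, h3⟩; exact ⟨h3, h2⟩
      · rintro ⟨h1, h2⟩; exact ⟨⟨hX.2 ρ hρX η h1, h2⟩, h1⟩
    have hterm : ∀ η ∈ (facesC X (ℓ + 1)).filter (fun η => η ⊆ ρ),
        sCoef ℓ η σ * sCoef ℓ η τ * ((k : ℝ) + 1) *
          (Real.sqrt (w σ) * Real.sqrt (w τ) *
            (incSign (σ \ η) (ρ \ η) * incSign (τ \ η) (ρ \ η) * (w ρ)⁻¹))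
        = ((k : ℝ) + 1) * (((k + 1).choose (ℓ + 1) : ℝ))⁻¹ *
            (incSign σ ρ * incSign τ ρ) *
            (Real.sqrt (w σ) * Real.sqrt (w τ) * (w ρ)⁻¹) := by
      intro η hη
      have hηρ : η ⊆ ρ := (Finset.mem_filter.mp hη).2
      have h := term_key ℓ k η ρ σ τ hσc hτc hρc hηρ hρσ hρτ
      linear_combination ((k : ℝ) + 1) * Real.sqrt (w σ) * Real.sqrt (w τ) * (w ρ)⁻¹ * h
    rw [Finset.sum_congr rfl hterm, Finset.sum_const, hset, Finset.card_powersetCard, hρc,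
      nsmul_eq_mul]
    have hc := choose_arith ℓ k hlk
    have hCpos : (0 : ℝ) < (((k + 1).choose (ℓ + 1) : ℕ) : ℝ) := by
      exact_mod_cast Nat.choose_pos (by omega : ℓ + 1 ≤ k + 1)
    have hc2 : ((k : ℝ) - ℓ) = ((k : ℝ) + 1) * (k.choose (ℓ + 1)) *
        (((k + 1).choose (ℓ + 1) : ℝ))⁻¹ := by
      field_simp
      linarith [hc]
    rw [hc2]; ring
  -- Step 4: rewrite the RHS
  have hRHS : symLapDownE X w k σ τ = Real.sqrt (w σ) * Real.sqrt (w τ) *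
      ∑ ρ ∈ facesC X k, (if ρ ⊆ σ ∧ ρ ⊆ τ
        then incSign σ ρ * incSign τ ρ * (w ρ)⁻¹ else 0) := by
    unfold symLapDownE
    rw [dif_pos (⟨hσ, hτ⟩ : σ ∈ facesC X (k + 1) ∧ τ ∈ facesC X (k + 1))]
    exact symLapDown_apply X w k hwX ⟨σ, hσ⟩ ⟨τ, hτ⟩
  refine Eq.trans (Finset.sum_congr rfl hstep1) ?_
  rw [Finset.sum_comm' hcomm]
  rw [hRHS, ← Finset.sum_filter, Finset.mul_sum, Finset.mul_sum]
  exact Finset.sum_congr rfl hinner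


end Garland
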